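/- arXiv:2002.05461 — 8 statements merged into one kernel-verified Lean document; each statement's English description precedes it below -/
import Mathlib

section
/- If u : V → ℝ is superlinear with conjugate ū(x) = -u(-x), then for all x, y ∈ V, max(|u(x) - u(y)|, |ū(x) - ū(y)|) ≤ max(|u(x-y)|, |ū(x-y)|). -/
theorem stmt2 {V : Type*} [AddCommGroup V] [Module ℝ V] (u : V → ℝ)
    (hsup : ∀ x y : V, u x + u y ≤ u (x + y))
    (hhom : ∀ (x : V) (c : ℝ), 0 ≤ c → u (c • x) = c * u x) :
    ∀ x y : V,
      max |u x - u y| |(-u (-x)) - (-u (-y))| ≤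
        max |u (x - y)| |(-u (-(x - y)))| := by
  intro x y
  have key : ∀ a b : V, u (a - b) ≤ u a - u b ∧ u a - u b ≤ -u (b - a) := by
    intro a b
    constructor
    · have := hsup b (a - b)
      simp only [add_sub_cancel] at this
      linarith
    · have := hsup a (b - a)
      simp only [add_sub_cancel] at this
      linarith
  obtain ⟨h1, h2⟩ := key x y
  obtain ⟨h3, h4⟩ := key (-y) (-x)
  have e1 : (-y) - (-x) = x - y := by abel
  have e2 : (-x) - (-y) = -(x - y) := by abel
  have e3 : y - x = -(x - y) := by abel
  rw [e1] at h3
  rw [e2] at h4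
  rw [e3] at h2
  have bound : ∀ d : ℝ, u (x - y) ≤ d → d ≤ -u (-(x - y)) →
      |d| ≤ max |u (x - y)| |(-u (-(x - y)))| := by
    intro d hda hdb
    rw [abs_le]
    constructor
    · have : -|u (x - y)| ≤ u (x - y) := neg_abs_le _
      have h' : -max |u (x - y)| |(-u (-(x - y)))| ≤ -|u (x - y)| := by
        simp [le_max_left]
      linarith
    · have : -u (-(x - y)) ≤ |(-u (-(x - y)))| := le_abs_self _
      have h' : |(-u (-(x - y)))| ≤ max |u (x - y)| |(-u (-(x - y)))| := le_max_right _ _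
      linarith
  exact max_le (bound _ h1 h2) (bound _ (by linarith) (by linarith))
end

section
/- Let D ⊆ V be a coherent set of desirable options and fix o in the topological interior of the positive cone {x : x ≻ 0}. Define u_o(x) := sup{α ∈ ℝ : x - αo ∈ D}. Then u_o is a bounded superlinear real functional, u_o(x) ≥ 0 for all x ∈ D, and u_o(y) ≤ 0 for all y ∉ D. -/
/-!
Write `S x = {α | x - α • o ∈ D}`, so that `u_o x = sSup (S x)`. The set `D` is a convex cone
without `0`, and `o` is an interior point of `D`, say `Metric.ball o ε ⊆ D`. Then
`x + t • o = t • (o + t⁻¹ • x) ∈ D` once `‖x‖ < t * ε`, so `S x` contains every `α < -‖x‖ / ε`;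
and `S x` lies below `‖x‖ / ε`, since otherwise `(x - α • o) + (α • o - x) = 0` would be in `D`.
Superadditivity and homogeneity are inherited from `S x + S y ⊆ S (x + y)` and
`S (c • x) = c • S x`, and `S 0 = Iio 0`.
-/
open Set
open scoped Pointwise

namespace ConvexCone

variable {V : Type*} [NormedAddCommGroup V] [NormedSpace ℝ V] {C : ConvexCone ℝ V} {o : V}

noncomputable def utility (C : ConvexCone ℝ V) (o : V) (x : V) : ℝ :=
  sSup {α : ℝ | x - α • o ∈ C}

lemma add_smul_mem_of_ball_subset {ε t : ℝ} (hball : Metric.ball o ε ⊆ C) (ht : 0 < t) {x : V}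
    (hx : ‖x‖ < t * ε) : x + t • o ∈ C := by
  have hmem : o + t⁻¹ • x ∈ C := by
    refine hball ?_
    rw [Metric.mem_ball, dist_eq_norm, add_sub_cancel_left, norm_smul, Real.norm_eq_abs,
      abs_of_pos (inv_pos.2 ht), inv_mul_lt_iff₀ ht]
    exact hx
  have hx_eq : t • (o + t⁻¹ • x) = x + t • o := by
    rw [smul_add, smul_inv_smul₀ ht.ne', add_comm]
  exact hx_eq ▸ C.smul_mem ht hmem

lemma add_smul_mem (ho : o ∈ C) {x : V} (hx : x ∈ C) {t : ℝ} (ht : 0 < t) : x + t • o ∈ C :=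
  C.add_mem hx (C.smul_mem ht ho)

lemma le_div_of_sub_smul_mem (hC0 : (0 : V) ∉ C) {ε : ℝ} (hε : 0 < ε)
    (hball : Metric.ball o ε ⊆ C) {x : V} {α : ℝ} (hα : x - α • o ∈ C) : α ≤ ‖x‖ / ε := by
  by_contra! hlt
  have hαpos : 0 < α := (div_nonneg (norm_nonneg x) hε.le).trans_lt hlt
  have hneg : -x + α • o ∈ C :=
    add_smul_mem_of_ball_subset hball hαpos (by rwa [norm_neg, ← div_lt_iff₀ hε])
  have hzero : (x - α • o) + (-x + α • o) = 0 := by abel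
  exact hC0 (hzero ▸ C.add_mem hα hneg)

lemma sub_smul_mem_of_lt_neg_div {ε : ℝ} (hε : 0 < ε) (hball : Metric.ball o ε ⊆ C) {x : V}
    {α : ℝ} (hα : α < -(‖x‖ / ε)) : x - α • o ∈ C := by
  rw [← neg_neg α, neg_smul, sub_neg_eq_add]
  refine add_smul_mem_of_ball_subset hball ((div_nonneg (norm_nonneg x) hε.le).trans_lt
    (lt_neg.mp hα)) ?_
  rwa [← div_lt_iff₀ hε, lt_neg]

lemma nonempty_setOf_sub_smul_mem (ho : o ∈ interior (C : Set V)) (x : V) :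
    {α : ℝ | x - α • o ∈ C}.Nonempty := by
  obtain ⟨ε, hε, hball⟩ := Metric.mem_nhds_iff.mp (mem_interior_iff_mem_nhds.mp ho)
  exact ⟨-(‖x‖ / ε) - 1, sub_smul_mem_of_lt_neg_div hε hball (sub_one_lt _)⟩

lemma bddAbove_setOf_sub_smul_mem (hC0 : (0 : V) ∉ C) (ho : o ∈ interior (C : Set V)) (x : V) :
    BddAbove {α : ℝ | x - α • o ∈ C} := by
  obtain ⟨ε, hε, hball⟩ := Metric.mem_nhds_iff.mp (mem_interior_iff_mem_nhds.mp ho)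
  exact ⟨‖x‖ / ε, fun _ hα => le_div_of_sub_smul_mem hC0 hε hball hα⟩

lemma utility_le_norm_div (hC0 : (0 : V) ∉ C) (ho : o ∈ interior (C : Set V)) {ε : ℝ}
    (hε : 0 < ε) (hball : Metric.ball o ε ⊆ C) (x : V) : C.utility o x ≤ ‖x‖ / ε :=
  csSup_le (nonempty_setOf_sub_smul_mem ho x) fun _ hα => le_div_of_sub_smul_mem hC0 hε hball hα

lemma csSup_le_utility_of_subset (hC0 : (0 : V) ∉ C) (ho : o ∈ interior (C : Set V)) {s : Set ℝ}
    (hs : s.Nonempty) {x : V} (hsub : s ⊆ {α : ℝ | x - α • o ∈ C}) : sSup s ≤ C.utility o x :=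
  csSup_le_csSup (bddAbove_setOf_sub_smul_mem hC0 ho x) hs hsub

theorem utility_add_le (hC0 : (0 : V) ∉ C) (ho : o ∈ interior (C : Set V)) (x y : V) :
    C.utility o x + C.utility o y ≤ C.utility o (x + y) := by
  have hx := nonempty_setOf_sub_smul_mem ho x
  have hy := nonempty_setOf_sub_smul_mem ho y
  rw [utility, utility, ← csSup_add hx (bddAbove_setOf_sub_smul_mem hC0 ho x) hy
    (bddAbove_setOf_sub_smul_mem hC0 ho y)]
  refine csSup_le_utility_of_subset hC0 ho (hx.add hy) (add_subset_iff.mpr fun a ha b hb => ?_)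
  have hsum : x - a • o + (y - b • o) = x + y - (a + b) • o := by rw [add_smul]; abel
  rw [mem_ofPred_eq, ← hsum]
  exact C.add_mem ha hb

lemma setOf_smul_sub_smul_mem {c : ℝ} (hc : 0 < c) (x : V) :
    {α : ℝ | c • x - α • o ∈ C} = c • {α : ℝ | x - α • o ∈ C} := by
  ext α
  rw [mem_smul_set_iff_inv_smul_mem₀ hc.ne', mem_ofPred_eq, mem_ofPred_eq,
    ← C.smul_mem_iff (inv_pos.2 hc), smul_sub, inv_smul_smul₀ hc.ne', smul_smul, smul_eq_mul]

theorem utility_zero (hC0 : (0 : V) ∉ C) (ho : o ∈ C) : C.utility o 0 = 0 := by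
  have hset : {α : ℝ | (0 : V) - α • o ∈ C} = Iio 0 := by
    ext α
    rw [mem_ofPred_eq, zero_sub, mem_Iio]
    constructor
    · intro hα
      by_contra! hα0
      rcases hα0.eq_or_lt with rfl | hpos
      · exact hC0 (by simpa using hα)
      · exact hC0 (by simpa using C.add_mem hα (C.smul_mem hpos ho))
    · intro hα
      rw [← neg_smul]
      exact C.smul_mem (neg_pos.2 hα) ho
  rw [utility, hset, csSup_Iio]

theorem utility_smul (hC0 : (0 : V) ∉ C) (ho : o ∈ interior (C : Set V)) (x : V) {c : ℝ}
    (hc : 0 ≤ c) : C.utility o (c • x) = c * C.utility o x := by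
  rcases hc.eq_or_lt with rfl | hpos
  · rw [zero_smul, zero_mul, utility_zero hC0 (interior_subset ho)]
  · rw [utility, setOf_smul_sub_smul_mem hpos, Real.sSup_smul_of_nonneg hpos.le, smul_eq_mul,
      utility]

theorem abs_utility_le (hC0 : (0 : V) ∉ C) (ho : o ∈ interior (C : Set V)) :
    ∃ K : ℝ, ∀ x : V, |C.utility o x| ≤ K * ‖x‖ := by
  obtain ⟨ε, hε, hball⟩ := Metric.mem_nhds_iff.mp (mem_interior_iff_mem_nhds.mp ho)
  refine ⟨ε⁻¹, fun x => abs_le.mpr ⟨?_, ?_⟩⟩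
  · rw [← div_eq_inv_mul, ← csSup_Iio (a := -(‖x‖ / ε))]
    exact csSup_le_utility_of_subset hC0 ho nonempty_Iio fun _ hα =>
      sub_smul_mem_of_lt_neg_div hε hball hα
  · rw [← div_eq_inv_mul]
    exact utility_le_norm_div hC0 ho hε hball x

theorem utility_nonneg_of_mem (hC0 : (0 : V) ∉ C) (ho : o ∈ interior (C : Set V)) {x : V}
    (hx : x ∈ C) : 0 ≤ C.utility o x := by
  rw [← csSup_Iio (a := (0 : ℝ))]
  refine csSup_le_utility_of_subset hC0 ho nonempty_Iio fun α hα => ?_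
  rw [mem_ofPred_eq, ← neg_neg α, neg_smul, sub_neg_eq_add]
  exact add_smul_mem (interior_subset ho) hx (neg_pos.2 hα)

theorem utility_nonpos_of_notMem (ho : o ∈ interior (C : Set V)) {y : V} (hy : y ∉ C) :
    C.utility o y ≤ 0 := by
  refine csSup_le (nonempty_setOf_sub_smul_mem ho y) fun α hα => ?_
  by_contra! hpos
  exact hy (by simpa using add_smul_mem (interior_subset ho) hα hpos)

end ConvexCone

theorem stmt9_general {V : Type*} [NormedAddCommGroup V] [NormedSpace ℝ V]
    (gt : V → V → Prop)
    (D : Set V)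
    (hD0 : (0 : V) ∉ D)
    (hDcone : ∀ x ∈ D, ∀ y ∈ D, ∀ l m : ℝ, 0 ≤ l → 0 ≤ m → 0 < l + m → l • x + m • y ∈ D)
    (hDpos : {x : V | gt x 0} ⊆ D)
    (o : V) (ho : o ∈ interior {x : V | gt x 0}) :
    (∀ x y : V,
        (fun z : V => sSup {α : ℝ | z - α • o ∈ D}) x +
          (fun z : V => sSup {α : ℝ | z - α • o ∈ D}) y ≤
        (fun z : V => sSup {α : ℝ | z - α • o ∈ D}) (x + y)) ∧
    (∀ (x : V) (c : ℝ), 0 ≤ c →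
        (fun z : V => sSup {α : ℝ | z - α • o ∈ D}) (c • x) =
          c * (fun z : V => sSup {α : ℝ | z - α • o ∈ D}) x) ∧
    (∃ K : ℝ, ∀ x : V, |(fun z : V => sSup {α : ℝ | z - α • o ∈ D}) x| ≤ K * ‖x‖) ∧
    (∀ x ∈ D, 0 ≤ (fun z : V => sSup {α : ℝ | z - α • o ∈ D}) x) ∧
    (∀ y ∉ D, (fun z : V => sSup {α : ℝ | z - α • o ∈ D}) y ≤ 0) := by
  let C : ConvexCone ℝ V :=
    { carrier := D
      smul_mem' := fun c hc x hx => by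
        simpa using hDcone x hx x hx c 0 hc.le le_rfl (by linarith)
      add_mem' := fun x hx y hy => by
        simpa using hDcone x hx y hy 1 1 zero_le_one zero_le_one (by norm_num) }
  have hC0 : (0 : V) ∉ C := hD0
  have hoC : o ∈ interior (C : Set V) := interior_mono hDpos ho
  exact ⟨C.utility_add_le hC0 hoC, fun x _ hc => C.utility_smul hC0 hoC x hc,
    C.abs_utility_le hC0 hoC, fun _ hx => C.utility_nonneg_of_mem hC0 hoC hx,
    fun _ hy => C.utility_nonpos_of_notMem hoC hy⟩

theorem stmt9 {V : Type*} [NormedAddCommGroup V] [NormedSpace ℝ V] [CompleteSpace V]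
    (gt : V → V → Prop)
    (hirr : ∀ x : V, ¬ gt x x)
    (htrans : ∀ x y z : V, gt x y → gt y z → gt x z)
    (haddc : ∀ x y z : V, gt x y → gt (x + z) (y + z))
    (hsmulc : ∀ (x y : V) (c : ℝ), 0 < c → gt x y → gt (c • x) (c • y))
    (hdual : ∃ f : V →L[ℝ] ℝ, ∀ x : V, gt x 0 → 0 < f x)
    (D : Set V)
    (hD0 : (0 : V) ∉ D)
    (hDcone : ∀ x ∈ D, ∀ y ∈ D, ∀ l m : ℝ, 0 ≤ l → 0 ≤ m → 0 < l + m → l • x + m • y ∈ D)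
    (hDpos : {x : V | gt x 0} ⊆ D)
    (o : V) (ho : o ∈ interior {x : V | gt x 0}) :
    (∀ x y : V,
        (fun z : V => sSup {α : ℝ | z - α • o ∈ D}) x +
          (fun z : V => sSup {α : ℝ | z - α • o ∈ D}) y ≤
        (fun z : V => sSup {α : ℝ | z - α • o ∈ D}) (x + y)) ∧
    (∀ (x : V) (c : ℝ), 0 ≤ c →
        (fun z : V => sSup {α : ℝ | z - α • o ∈ D}) (c • x) =
          c * (fun z : V => sSup {α : ℝ | z - α • o ∈ D}) x) ∧
    (∃ K : ℝ, ∀ x : V, |(fun z : V => sSup {α : ℝ | z - α • o ∈ D}) x| ≤ K * ‖x‖) ∧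
    (∀ x ∈ D, 0 ≤ (fun z : V => sSup {α : ℝ | z - α • o ∈ D}) x) ∧
    (∀ y ∉ D, (fun z : V => sSup {α : ℝ | z - α • o ∈ D}) y ≤ 0) :=
  stmt9_general gt D hD0 hDcone hDpos o ho
end

section
/- Let D ⊆ V be a coherent set of desirable options and o an interior point of the positive cone. With u_o(x) := sup{α ∈ ℝ : x - αo ∈ D}, one has {x ∈ V : u_o(x) > 0} = int(D), the topological interior of D. -/
/-!
Write `S x = {α | x - α • o ∈ D}`. Since `o` is interior to `D`, `o - α⁻¹ • x ∈ D` for large `α`;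
as `(x - α • o) + α • (o - α⁻¹ • x) = 0 ∉ D`, the set `S x` is bounded above. If `α ∈ S x` with
`α > 0`, then every `y` near `x` is `(x - α • o) + α • (o + α⁻¹ • (y - x))` with the second vector
near `o`, hence in `D`; so `x ∈ interior D`. Conversely, if `x ∈ interior D` then `x - α • o ∈ D`
for small `α > 0`, and boundedness turns this into `sSup (S x) > 0`.
-/

open Filter Topology

section ConeInterior

variable {V : Type*} [AddCommGroup V] [Module ℝ V] [TopologicalSpace V] [ContinuousSub V]
  [ContinuousSMul ℝ V] {D : Set V} {o : V}

theorem bddAbove_setOf_sub_smul_mem (hD0 : (0 : V) ∉ D)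
    (hD : ∀ x ∈ D, ∀ y ∈ D, ∀ a : ℝ, 0 < a → x + a • y ∈ D) (ho : o ∈ interior D) (x : V) :
    BddAbove {α : ℝ | x - α • o ∈ D} := by
  have hlim : Tendsto (fun α : ℝ => o - α⁻¹ • x) atTop (𝓝 o) := by
    simpa using tendsto_const_nhds.sub ((tendsto_inv_atTop_zero (𝕜 := ℝ)).smul_const x)
  obtain ⟨A, hA⟩ := eventually_atTop.1 <|
    (eventually_gt_atTop 0).and (hlim.eventually (isOpen_interior.mem_nhds ho))
  refine ⟨A, fun α hα => le_of_not_gt fun hAα => hD0 ?_⟩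
  obtain ⟨hαpos, hαo⟩ := hA α hAα.le
  have hzero : x - α • o + α • (o - α⁻¹ • x) = 0 := by
    rw [smul_sub, smul_smul, mul_inv_cancel₀ hαpos.ne', one_smul]
    abel
  simpa only [hzero] using hD _ hα _ (interior_subset hαo) α hαpos

theorem mem_interior_of_sub_smul_mem [ContinuousAdd V]
    (hD : ∀ x ∈ D, ∀ y ∈ D, ∀ a : ℝ, 0 < a → x + a • y ∈ D)
    (ho : o ∈ interior D) {x : V} {α : ℝ} (hα : 0 < α) (hxα : x - α • o ∈ D) :
    x ∈ interior D := by
  have hcont : Continuous fun y : V => o + α⁻¹ • (y - x) := by fun_prop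
  have hnear : ∀ᶠ y in 𝓝 x, o + α⁻¹ • (y - x) ∈ interior D :=
    hcont.continuousAt.preimage_mem_nhds (by simpa using isOpen_interior.mem_nhds ho)
  refine mem_interior_iff_mem_nhds.2 (mem_of_superset hnear fun y hy => ?_)
  have hy_eq : x - α • o + α • (o + α⁻¹ • (y - x)) = y := by
    rw [smul_add, smul_smul, mul_inv_cancel₀ hα.ne', one_smul]
    abel
  simpa only [hy_eq] using hD _ hxα _ (interior_subset hy) α hα

theorem exists_pos_sub_smul_mem_of_mem_interior {x : V} (hx : x ∈ interior D) : ∃ α : ℝ, 0 < α ∧ x - α • o ∈ D := by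
  have hlim : Tendsto (fun α : ℝ => x - α • o) (𝓝[>] 0) (𝓝 x) := by
    have hcont : Continuous fun α : ℝ => x - α • o := by fun_prop
    simpa using (hcont.tendsto 0).mono_left nhdsWithin_le_nhds
  obtain ⟨α, hα, hxα⟩ :=
    (eventually_mem_nhdsWithin.and (hlim.eventually (mem_interior_iff_mem_nhds.1 hx))).exists
  exact ⟨α, hα, hxα⟩

end ConeInterior

theorem stmt10_general {V : Type*} [NormedAddCommGroup V] [NormedSpace ℝ V]
    (gt : V → V → Prop)
    (D : Set V)
    (hD0 : (0 : V) ∉ D)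
    (hDcone : ∀ x ∈ D, ∀ y ∈ D, ∀ l m : ℝ, 0 ≤ l → 0 ≤ m → 0 < l + m → l • x + m • y ∈ D)
    (hDpos : {x : V | gt x 0} ⊆ D)
    (o : V) (ho : o ∈ interior {x : V | gt x 0}) :
    {x : V | 0 < sSup {α : ℝ | x - α • o ∈ D}} = interior D := by
  have hoD : o ∈ interior D := interior_mono hDpos ho
  have hD : ∀ x ∈ D, ∀ y ∈ D, ∀ a : ℝ, 0 < a → x + a • y ∈ D := fun x hx y hy a ha => by
    simpa using hDcone x hx y hy 1 a zero_le_one ha.le (by linarith)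
  ext x
  constructor
  · intro hx
    have hne : {α : ℝ | x - α • o ∈ D}.Nonempty :=
      Set.nonempty_iff_ne_empty.2 fun hempty => by simp [hempty] at hx
    obtain ⟨α, hxα, hα⟩ := exists_lt_of_lt_csSup hne hx
    exact mem_interior_of_sub_smul_mem hD hoD hα hxα
  · intro hx
    obtain ⟨α, hα, hxα⟩ := exists_pos_sub_smul_mem_of_mem_interior (o := o) hx
    exact hα.trans_le <|
      le_csSup (bddAbove_setOf_sub_smul_mem hD0 hD hoD x) (show α ∈ {α : ℝ | x - α • o ∈ D} from hxα)

theorem stmt10 {V : Type*} [NormedAddCommGroup V] [NormedSpace ℝ V] [CompleteSpace V]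
    (gt : V → V → Prop)
    (hirr : ∀ x : V, ¬ gt x x)
    (htrans : ∀ x y z : V, gt x y → gt y z → gt x z)
    (haddc : ∀ x y z : V, gt x y → gt (x + z) (y + z))
    (hsmulc : ∀ (x y : V) (c : ℝ), 0 < c → gt x y → gt (c • x) (c • y))
    (hdual : ∃ f : V →L[ℝ] ℝ, ∀ x : V, gt x 0 → 0 < f x)
    (D : Set V)
    (hD0 : (0 : V) ∉ D)
    (hDcone : ∀ x ∈ D, ∀ y ∈ D, ∀ l m : ℝ, 0 ≤ l → 0 ≤ m → 0 < l + m → l • x + m • y ∈ D)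
    (hDpos : {x : V | gt x 0} ⊆ D)
    (o : V) (ho : o ∈ interior {x : V | gt x 0}) :
    {x : V | 0 < sSup {α : ℝ | x - α • o ∈ D}} = interior D :=
  stmt10_general gt D hD0 hDcone hDpos o ho
end

section
/- A set of desirable options D ⊆ V is coherent and topologically open (essentially Archimedean) if and only if there exists a positive bounded superlinear functional u with D = {x : u(x) > 0}. -/
theorem stmt11 {V : Type*} [NormedAddCommGroup V] [NormedSpace ℝ V] [CompleteSpace V]
    (gt : V → V → Prop)
    (hirr : ∀ x : V, ¬ gt x x)
    (htrans : ∀ x y z : V, gt x y → gt y z → gt x z)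
    (haddc : ∀ x y z : V, gt x y → gt (x + z) (y + z))
    (hsmulc : ∀ (x y : V) (c : ℝ), 0 < c → gt x y → gt (c • x) (c • y))
    (hint : (interior {x : V | gt x 0}).Nonempty)
    (hdual : ∃ f : V →L[ℝ] ℝ, ∀ x : V, gt x 0 → 0 < f x)
    (D : Set V) :
    (((0 : V) ∉ D ∧
      (∀ x ∈ D, ∀ y ∈ D, ∀ l m : ℝ, 0 ≤ l → 0 ≤ m → 0 < l + m → l • x + m • y ∈ D) ∧
      {x : V | gt x 0} ⊆ D) ∧ IsOpen D) ↔
    (∃ u : V → ℝ,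
      (∀ x y : V, u x + u y ≤ u (x + y)) ∧
      (∀ (x : V) (c : ℝ), 0 ≤ c → u (c • x) = c * u x) ∧
      (∃ K : ℝ, ∀ x : V, |u x| ≤ K * ‖x‖) ∧
      (∀ x : V, gt x 0 → 0 < u x) ∧
      D = {x : V | 0 < u x}) := by
  constructor
  · rintro ⟨⟨h0, hcomb, hcone⟩, hopen⟩
    obtain ⟨z, hz⟩ := hint
    have hzD : z ∈ D := hcone (interior_subset hz)
    obtain ⟨ε, hε, hball⟩ := Metric.isOpen_iff.mp hopen z hzD
    classical
    set S : V → Set ℝ := fun x => {t : ℝ | x - t • z ∈ D} with hSdef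
    have hscale : ∀ w ∈ D, ∀ c : ℝ, 0 < c → c • w ∈ D := by
      intro w hw c hc
      have := hcomb w hw w hw c 0 hc.le le_rfl (by linarith)
      simpa using this
    have hadd2 : ∀ w₁ ∈ D, ∀ w₂ ∈ D, w₁ + w₂ ∈ D := by
      intro w₁ h₁ w₂ h₂
      have := hcomb w₁ h₁ w₂ h₂ 1 1 zero_le_one zero_le_one (by norm_num)
      simpa using this
    have hbig : ∀ x : V, ∀ s : ℝ, ‖x‖ < s * ε → x + s • z ∈ D := by
      intro x s hs
      have hspos : 0 < s := by nlinarith [norm_nonneg x]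
      have h1 : z + s⁻¹ • x ∈ Metric.ball z ε := by
        rw [Metric.mem_ball, dist_eq_norm]
        have : z + s⁻¹ • x - z = s⁻¹ • x := by abel
        rw [this, norm_smul, Real.norm_eq_abs, abs_of_pos (inv_pos.mpr hspos)]
        rw [inv_mul_lt_iff₀ hspos]
        linarith
      have h2 : z + s⁻¹ • x ∈ D := hball h1
      have h3 : s • (z + s⁻¹ • x) ∈ D := hscale _ h2 s hspos
      have h4 : s • (z + s⁻¹ • x) = x + s • z := by
        rw [smul_add, smul_inv_smul₀ (ne_of_gt hspos)]
        abel
      rwa [h4] at h3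
    have hub : ∀ x : V, ∀ t ∈ S x, t ≤ ‖x‖ / ε := by
      intro x t ht
      by_contra hc
      push_neg at hc
      have h1 : ‖x‖ < t * ε := by
        rw [div_lt_iff₀ hε] at hc
        linarith
      have h2 : -x + t • z ∈ D := by
        have := hbig (-x) t (by rwa [norm_neg])
        exact this
      have h3 : (x - t • z) + (-x + t • z) ∈ D := hadd2 _ ht _ h2
      have h4 : (x - t • z) + (-x + t • z) = 0 := by abel
      rw [h4] at h3
      exact h0 h3
    have hbdd : ∀ x : V, BddAbove (S x) := fun x => ⟨‖x‖ / ε, fun t ht => hub x t ht⟩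
    have hmemneg : ∀ x : V, ∀ t : ℝ, t * ε < -‖x‖ → t ∈ S x := by
      intro x t ht
      have h1 : ‖x‖ < (-t) * ε := by linarith
      have h2 : x + (-t) • z ∈ D := hbig x (-t) h1
      have h3 : x - t • z = x + (-t) • z := by rw [neg_smul]; abel
      simpa [hSdef, h3] using h2
    have hne : ∀ x : V, (S x).Nonempty := by
      intro x
      refine ⟨-(‖x‖ / ε + 1), hmemneg x _ ?_⟩
      have : (-(‖x‖ / ε + 1)) * ε = -‖x‖ - ε := by field_simp; ring
      rw [this]; linarith
    set u : V → ℝ := fun x => sSup (S x) with hudef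
    have hu_le : ∀ x : V, u x ≤ ‖x‖ / ε := fun x => csSup_le (hne x) (hub x)
    have hu_ge : ∀ x : V, -(‖x‖ / ε) ≤ u x := by
      intro x
      refine le_of_forall_pos_le_add ?_
      intro δ hδ
      have hmem : -(‖x‖ / ε) - δ ∈ S x := by
        apply hmemneg
        have : (-(‖x‖ / ε) - δ) * ε = -‖x‖ - δ * ε := by field_simp
        rw [this]
        nlinarith
      have := le_csSup (hbdd x) hmem
      linarith
    have hDmem : ∀ x ∈ D, 0 < u x := by
      intro x hx
      obtain ⟨δ, hδ, hb⟩ := Metric.isOpen_iff.mp hopen x hx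
      set t : ℝ := δ / (‖z‖ + 1) with htdef
      have hzpos : (0:ℝ) < ‖z‖ + 1 := by positivity
      have htpos : 0 < t := div_pos hδ hzpos
      have hmem : t ∈ S x := by
        have h1 : x - t • z ∈ Metric.ball x δ := by
          rw [Metric.mem_ball, dist_eq_norm]
          have : x - t • z - x = -(t • z) := by abel
          rw [this, norm_neg, norm_smul, Real.norm_eq_abs, abs_of_pos htpos]
          calc t * ‖z‖ < t * (‖z‖ + 1) := by nlinarith
            _ = δ := by rw [htdef]; field_simp
        exact hb h1
      have := le_csSup (hbdd x) hmem
      linarith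
    have hmemD : ∀ x : V, 0 < u x → x ∈ D := by
      intro x hx
      obtain ⟨t, ht, htpos⟩ := exists_lt_of_lt_csSup (hne x) hx
      have h1 : (1:ℝ) • (x - t • z) + t • z ∈ D :=
        hcomb _ ht _ hzD 1 t zero_le_one htpos.le (by linarith)
      have h2 : (1:ℝ) • (x - t • z) + t • z = x := by rw [one_smul]; abel
      rwa [h2] at h1
    have hom_le : ∀ (x : V) (c : ℝ), 0 < c → u (c • x) ≤ c * u x := by
      intro x c hc
      apply csSup_le (hne _)
      intro t ht
      have h1 : c⁻¹ • (c • x - t • z) ∈ D := hscale _ ht c⁻¹ (inv_pos.mpr hc)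
      have h2 : c⁻¹ • (c • x - t • z) = x - (c⁻¹ * t) • z := by
        rw [smul_sub, smul_smul, smul_smul, inv_mul_cancel₀ (ne_of_gt hc), one_smul]
      rw [h2] at h1
      have h3 : c⁻¹ * t ≤ u x := le_csSup (hbdd x) h1
      calc t = c * (c⁻¹ * t) := by field_simp
        _ ≤ c * u x := by nlinarith
    have hu0 : u 0 = 0 := by
      have hle : u 0 ≤ 0 := by
        apply csSup_le (hne 0)
        intro t ht
        by_contra hc
        push_neg at hc
        have h1 : (0:V) - t • z ∈ D := ht
        have h2 : (0:V) - t • z = -(t • z) := by abel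
        rw [h2] at h1
        have h3 : t • z ∈ D := hscale z hzD t hc
        have h4 : -(t • z) + t • z ∈ D := hadd2 _ h1 _ h3
        simp at h4
        exact h0 h4
      have hge : (0:ℝ) ≤ u 0 := by
        refine le_of_forall_pos_le_add ?_
        intro δ hδ
        have hmem : -δ ∈ S 0 := by
          show (0:V) - (-δ) • z ∈ D
          have h1 : (0:V) - (-δ) • z = δ • z := by rw [neg_smul]; abel
          rw [h1]
          exact hscale z hzD δ hδ
        have := le_csSup (hbdd 0) hmem
        linarith
      linarith
    refine ⟨u, ?_, ?_, ⟨ε⁻¹, ?_⟩, ?_, ?_⟩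
    · intro x y
      have hx := hne x
      have hy := hne y
      rw [hudef]
      have key : ∀ a ∈ S x, ∀ b ∈ S y, a + b ∈ S (x + y) := by
        intro a ha b hb
        have h1 : (x - a • z) + (y - b • z) ∈ D := hadd2 _ ha _ hb
        have h2 : (x - a • z) + (y - b • z) = (x + y) - (a + b) • z := by
          rw [add_smul]; abel
        rwa [h2] at h1
      have h1 : sSup (S x) ≤ sSup (S (x + y)) - sSup (S y) := by
        apply csSup_le hx
        intro a ha
        have h2 : sSup (S y) ≤ sSup (S (x + y)) - a := by
          apply csSup_le hy
          intro b hb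
          have := le_csSup (hbdd (x + y)) (key a ha b hb)
          linarith
        linarith
      linarith
    · intro x c hc
      rcases eq_or_lt_of_le hc with h | h
      · rw [← h, zero_smul, hu0, zero_mul]
      · have h1 := hom_le x c h
        have h2 := hom_le (c • x) c⁻¹ (inv_pos.mpr h)
        rw [inv_smul_smul₀ (ne_of_gt h)] at h2
        have h3 : c * u x ≤ u (c • x) := by
          have := mul_le_mul_of_nonneg_left h2 h.le
          rw [← mul_assoc, mul_inv_cancel₀ (ne_of_gt h), one_mul] at this
          exact this
        linarith
    · intro x
      rw [abs_le]
      constructor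
      · have := hu_ge x
        rw [div_eq_inv_mul] at this
        linarith
      · have := hu_le x
        rw [div_eq_inv_mul] at this
        linarith
    · intro x hx
      exact hDmem x (hcone hx)
    · ext x
      exact ⟨fun hx => hDmem x hx, fun hx => hmemD x hx⟩
  · rintro ⟨u, hsup, hhom, ⟨K, hK⟩, hpos, hDeq⟩
    subst hDeq
    have hu0 : u 0 = 0 := by
      have := hhom 0 0 le_rfl
      simpa using this
    obtain ⟨z, hz⟩ := hint
    have hgz : gt z 0 := (interior_subset hz : z ∈ {x : V | gt x 0})
    have hzne : z ≠ 0 := by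
      intro h
      rw [h] at hgz
      exact hirr 0 hgz
    have hKpos : 0 < K := by
      have h1 : 0 < u z := hpos z hgz
      have h2 : |u z| ≤ K * ‖z‖ := hK z
      have h3 : 0 < ‖z‖ := norm_pos_iff.mpr hzne
      nlinarith [abs_nonneg (u z), le_abs_self (u z)]
    refine ⟨⟨?_, ?_, ?_⟩, ?_⟩
    · simp [hu0]
    · intro x hx y hy l m hl hm hlm
      simp only [Set.mem_setOf_eq] at hx hy ⊢
      have h1 := hsup (l • x) (m • y)
      rw [hhom x l hl, hhom y m hm] at h1
      have h2 : 0 ≤ l * u x := mul_nonneg hl hx.le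
      have h3 : 0 ≤ m * u y := mul_nonneg hm hy.le
      have h4 : 0 < l * u x + m * u y := by
        rcases lt_or_eq_of_le hl with hl' | hl'
        · nlinarith
        · have hm' : 0 < m := by linarith
          nlinarith
      linarith
    · intro x hx
      exact hpos x hx
    · rw [Metric.isOpen_iff]
      intro x hx
      simp only [Set.mem_setOf_eq] at hx
      refine ⟨u x / K, div_pos hx hKpos, ?_⟩
      intro y hy
      rw [Metric.mem_ball, dist_eq_norm] at hy
      simp only [Set.mem_setOf_eq]
      have h1 := hsup x (y - x)
      have h2 : x + (y - x) = y := by abel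
      rw [h2] at h1
      have h3 : |u (y - x)| ≤ K * ‖y - x‖ := hK (y - x)
      have h4 : -(K * ‖y - x‖) ≤ u (y - x) := by
        have := neg_abs_le (u (y - x))
        linarith
      have h5 : K * ‖y - x‖ < u x := by
        rw [lt_div_iff₀ hKpos] at hy
        nlinarith [norm_nonneg (y - x)]
      linarith
end

section
/- A set of desirable options D ⊆ V is essentially Archimedean (coherent and open) and mixing if and only if there is a positive bounded linear functional f with D = {x : f(x) > 0}. -/
/-- The set of all positive linear combinations of elements of `S`. -/
def Posi {V : Type*} [AddCommGroup V] [Module ℝ V] (S : Set V) : Set V :=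
  {x | ∃ (n : ℕ) (c : Fin n → ℝ) (v : Fin n → V),
    0 < n ∧ (∀ i, 0 < c i) ∧ (∀ i, v i ∈ S) ∧ x = ∑ i, c i • v i}

/-- Mixingness of a set of desirable options. -/
def MixingSet {V : Type*} [AddCommGroup V] [Module ℝ V] (D : Set V) : Prop :=
  ∀ A : Finset V, (Posi (A : Set V) ∩ D).Nonempty → ∃ a ∈ A, a ∈ D

lemma fwd13 {V : Type*} [NormedAddCommGroup V] [NormedSpace ℝ V] (D : Set V)
    (h0 : (0:V) ∉ D)
    (hcomb : ∀ x ∈ D, ∀ y ∈ D, ∀ l m : ℝ, 0 ≤ l → 0 ≤ m → 0 < l + m → l • x + m • y ∈ D)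
    (hopen : IsOpen D) (hmix : MixingSet D)
    (e : V) (r : ℝ) (hr : 0 < r) (hball : Metric.ball e r ⊆ D) :
    ∃ f : V →L[ℝ] ℝ, D = {x : V | 0 < f x} := by
  classical
  have heD : e ∈ D := hball (by simp [hr])
  have Dadd : ∀ a ∈ D, ∀ b ∈ D, a + b ∈ D := fun a ha b hb => by
    simpa using hcomb a ha b hb 1 1 zero_le_one zero_le_one (by norm_num)
  have Dsmul : ∀ (c : ℝ), 0 < c → ∀ a ∈ D, c • a ∈ D := fun c hc a ha => by
    simpa using hcomb a ha a ha c 0 hc.le le_rfl (by linarith)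
  have negeD : (-e) ∉ D := by
    intro h
    exact h0 (by simpa using Dadd e heD (-e) h)
  have Csmul : ∀ (t : ℝ), t < 0 → t • e ∉ D := by
    intro t ht h
    apply negeD
    have := Dsmul (-t)⁻¹ (inv_pos.mpr (by linarith)) _ h
    rwa [smul_smul, inv_mul_eq_div, div_neg, div_self ht.ne, neg_one_smul] at this
  have Cadd : ∀ a b : V, a ∉ D → b ∉ D → a + b ∉ D := by
    intro a b ha hb hab
    have key : a + b ∈ Posi ((({a, b} : Finset V) : Set V)) := by
      refine ⟨2, fun _ => 1, ![a, b], two_pos, fun _ => one_pos, ?_, ?_⟩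
      · intro i; fin_cases i <;> simp
      · simp [Fin.sum_univ_two]
    obtain ⟨x, hxA, hxD⟩ := hmix {a, b} ⟨a + b, key, hab⟩
    rcases Finset.mem_insert.mp hxA with h | h
    · exact ha (h ▸ hxD)
    · exact hb ((Finset.mem_singleton.mp h) ▸ hxD)
  set S : V → Set ℝ := fun x => {t | x + t • e ∈ D} with hS
  have hup : ∀ x, ∀ t ∈ S x, ∀ s, t < s → s ∈ S x := by
    intro x t ht s hts
    have h1 : x + s • e = (x + t • e) + (s - t) • e := by module
    show x + s • e ∈ D
    rw [h1]
    exact Dadd _ ht _ (Dsmul _ (by linarith) e heD)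
  have hlarge : ∀ (x : V) (t : ℝ), ‖x‖ < t * r → t ∈ S x := by
    intro x t h
    have ht : 0 < t := by nlinarith [norm_nonneg x]
    have hu : e + t⁻¹ • x ∈ Metric.ball e r := by
      rw [Metric.mem_ball, dist_eq_norm]
      simp only [add_sub_cancel_left, norm_smul, Real.norm_eq_abs, abs_inv,
        abs_of_pos ht]
      rw [inv_mul_lt_iff₀ ht]
      linarith [mul_comm t r]
    have := Dsmul t ht _ (hball hu)
    show x + t • e ∈ D
    rw [smul_add, smul_smul, mul_inv_cancel₀ ht.ne', one_smul, add_comm] at this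
    exact this
  have hSne : ∀ x, (S x).Nonempty := by
    intro x
    refine ⟨‖x‖ / r + 1, hlarge x _ ?_⟩
    rw [add_mul, div_mul_cancel₀ _ hr.ne', one_mul]
    linarith
  have hbdd : ∀ x, ∀ t ∈ S x, -(‖x‖ / r + 1) ≤ t := by
    intro x t ht
    have hsS : (‖x‖ / r + 1) ∈ S (-x) := by
      refine hlarge (-x) _ ?_
      rw [norm_neg, add_mul, div_mul_cancel₀ _ hr.ne', one_mul]
      linarith
    have hsum : (t + (‖x‖ / r + 1)) • e ∈ D := by
      have h1 := Dadd _ ht _ hsS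
      have h2 : (x + t • e) + (-x + (‖x‖ / r + 1) • e) = (t + (‖x‖ / r + 1)) • e := by
        module
      rwa [h2] at h1
    by_contra hc
    push_neg at hc
    exact Csmul _ (by linarith) hsum
  have hBdd : ∀ x, BddBelow (S x) := fun x => ⟨-(‖x‖ / r + 1), fun t ht => hbdd x t ht⟩
  set τ : V → ℝ := fun x => sInf (S x) with hτ
  have hSopen : ∀ x, IsOpen (S x) := by
    intro x
    exact hopen.preimage (by continuity : Continuous fun t : ℝ => x + t • e)
  have hnm : ∀ x, τ x ∉ S x := by
    intro x hmem
    obtain ⟨ε, hε, hball'⟩ := Metric.isOpen_iff.mp (hSopen x) _ hmem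
    have h1 : τ x - ε / 2 ∈ S x := by
      apply hball'
      rw [Metric.mem_ball, Real.dist_eq, abs_lt]
      constructor <;> linarith
    have h2 : τ x ≤ τ x - ε / 2 := csInf_le (hBdd x) h1
    linarith
  have hchar : ∀ x t, t ∈ S x ↔ τ x < t := by
    intro x t
    constructor
    · intro ht
      have hle : τ x ≤ t := csInf_le (hBdd x) ht
      exact hle.lt_of_ne fun h => hnm x (by rw [h]; exact ht)
    · intro ht
      obtain ⟨s, hsS, hst⟩ := exists_lt_of_csInf_lt (hSne x) ht
      exact hup x s hsS t hst
  have hSIoi : ∀ x, S x = Set.Ioi (τ x) := fun x =>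
    Set.ext fun t => (hchar x t).trans Set.mem_Ioi.symm
  have hτval : ∀ (x : V) (a : ℝ), S x = Set.Ioi a → τ x = a := by
    intro x a h
    show sInf (S x) = a
    rw [h, csInf_Ioi]
  have hadd : ∀ x y, τ (x + y) = τ x + τ y := by
    intro x y
    refine hτval _ _ (Set.ext fun t => ?_)
    simp only [Set.mem_Ioi]
    constructor
    · intro ht
      by_contra hc
      push_neg at hc
      have h1 : (t - τ y) ∉ S x := fun h => absurd ((hchar x _).mp h) (by push_neg; linarith)
      have h2 : τ y ∉ S y := hnm y
      have h3 := Cadd _ _ h1 h2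
      have heq : (x + (t - τ y) • e) + (y + τ y • e) = (x + y) + t • e := by module
      rw [heq] at h3
      exact h3 ht
    · intro ht
      have h1 : τ x + (t - τ x - τ y) / 2 ∈ S x := (hchar x _).mpr (by linarith)
      have h2 : τ y + (t - τ x - τ y) / 2 ∈ S y := (hchar y _).mpr (by linarith)
      have h3 := Dadd _ h1 _ h2
      have heq : (x + (τ x + (t - τ x - τ y) / 2) • e) + (y + (τ y + (t - τ x - τ y) / 2) • e)
          = (x + y) + t • e := by module
      rwa [heq] at h3
  have hzero : τ 0 = 0 := by
    refine hτval _ _ (Set.ext fun t => ?_)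
    simp only [Set.mem_Ioi]
    constructor
    · intro ht
      have htD : (0 : V) + t • e ∈ D := ht
      rw [zero_add] at htD
      by_contra hc
      push_neg at hc
      rcases hc.lt_or_eq with h | h
      · exact Csmul t h htD
      · rw [h, zero_smul] at htD
        exact h0 htD
    · intro ht
      show (0 : V) + t • e ∈ D
      rw [zero_add]
      exact Dsmul t ht e heD
  have hneg : ∀ x, τ (-x) = -τ x := by
    intro x
    have := hadd x (-x)
    rw [add_neg_cancel, hzero] at this
    linarith
  have hpos : ∀ (c : ℝ), 0 < c → ∀ x, τ (c • x) = c * τ x := by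
    intro c hc x
    refine hτval _ _ (Set.ext fun t => ?_)
    simp only [Set.mem_Ioi]
    have key : t ∈ S (c • x) ↔ t / c ∈ S x := by
      have heq : c • (x + (t / c) • e) = c • x + t • e := by
        rw [smul_add, smul_smul, mul_div_cancel₀ _ hc.ne']
      constructor
      · intro h
        have h2 := Dsmul c⁻¹ (inv_pos.mpr hc) _ h
        show x + (t / c) • e ∈ D
        rw [← heq, smul_smul, inv_mul_cancel₀ hc.ne', one_smul] at h2
        exact h2
      · intro h
        have h2 := Dsmul c hc _ h
        rwa [heq] at h2
    rw [key, hchar, lt_div_iff₀ hc, mul_comm]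
  have hsmul : ∀ (c : ℝ) (x : V), τ (c • x) = c * τ x := by
    intro c x
    rcases lt_trichotomy c 0 with h | h | h
    · have h2 : c • x = -((-c) • x) := by rw [neg_smul, neg_neg]
      rw [h2, hneg, hpos (-c) (by linarith)]; ring
    · simp [h, hzero]
    · exact hpos c h x
  have hub : ∀ x, τ x ≤ ‖x‖ / r := by
    intro x
    have hsub : Set.Ioi (‖x‖ / r) ⊆ S x := by
      intro t ht
      exact hlarge x t (by rw [← div_lt_iff₀ hr]; exact ht)
    rw [hSIoi x] at hsub
    exact (Set.Ioi_subset_Ioi_iff).mp hsub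
  have hbound : ∀ x, |τ x| ≤ r⁻¹ * ‖x‖ := by
    intro x
    have h1 := hub x
    have h2 := hub (-x)
    rw [hneg, norm_neg] at h2
    rw [div_eq_inv_mul] at h1 h2
    rw [abs_le]
    constructor <;> linarith
  set g : V →ₗ[ℝ] ℝ :=
    { toFun := fun x => -τ x
      map_add' := fun x y => by
        show -τ (x + y) = -τ x + -τ y
        rw [hadd]; ring
      map_smul' := fun c x => by
        show -τ (c • x) = c * (-τ x)
        rw [hsmul]; ring } with hg
  refine ⟨g.mkContinuous r⁻¹ (fun x => by
    show ‖-τ x‖ ≤ r⁻¹ * ‖x‖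
    rw [Real.norm_eq_abs, abs_neg]
    exact hbound x), ?_⟩
  ext x
  rw [Set.mem_setOf_eq, LinearMap.mkContinuous_apply]
  show x ∈ D ↔ 0 < -τ x
  constructor
  · intro hx
    have h1 : (0 : ℝ) ∈ S x := by
      show x + (0 : ℝ) • e ∈ D
      rw [zero_smul, add_zero]
      exact hx
    have := (hchar x 0).mp h1
    linarith
  · intro hx
    have h1 : (0 : ℝ) ∈ S x := (hchar x 0).mpr (by linarith)
    have h2 : x + (0 : ℝ) • e ∈ D := h1
    rwa [zero_smul, add_zero] at h2


theorem stmt13 {V : Type*} [NormedAddCommGroup V] [NormedSpace ℝ V] [CompleteSpace V]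
    (gt : V → V → Prop)
    (hirr : ∀ x : V, ¬ gt x x)
    (htrans : ∀ x y z : V, gt x y → gt y z → gt x z)
    (haddc : ∀ x y z : V, gt x y → gt (x + z) (y + z))
    (hsmulc : ∀ (x y : V) (c : ℝ), 0 < c → gt x y → gt (c • x) (c • y))
    (hint : (interior {x : V | gt x 0}).Nonempty)
    (hdual : ∃ f : V →L[ℝ] ℝ, ∀ x : V, gt x 0 → 0 < f x)
    (D : Set V) :
    (((0 : V) ∉ D ∧
      (∀ x ∈ D, ∀ y ∈ D, ∀ l m : ℝ, 0 ≤ l → 0 ≤ m → 0 < l + m → l • x + m • y ∈ D) ∧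
      {x : V | gt x 0} ⊆ D) ∧ IsOpen D ∧ MixingSet D) ↔
    (∃ f : V →L[ℝ] ℝ, (∀ x : V, gt x 0 → 0 < f x) ∧ D = {x : V | 0 < f x}) := by
  constructor
  · rintro ⟨⟨h0, hcomb, hcone⟩, hopen, hmix⟩
    obtain ⟨e, he⟩ := hint
    have heD : e ∈ interior D := interior_mono hcone he
    obtain ⟨r, hr, hball⟩ := Metric.mem_nhds_iff.mp (mem_interior_iff_mem_nhds.mp heD)
    obtain ⟨f, hf⟩ := fwd13 D h0 hcomb hopen hmix e r hr hball
    refine ⟨f, ?_, hf⟩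
    intro x hx
    have : x ∈ D := hcone hx
    rw [hf] at this
    exact this
  · rintro ⟨f, hf, hD⟩
    subst hD
    refine ⟨⟨by simp, ?_, fun x hx => hf x hx⟩, ?_, ?_⟩
    · intro x hx y hy l m hl hm hlm
      simp only [Set.mem_setOf_eq, map_add, map_smul, smul_eq_mul] at *
      rcases hl.lt_or_eq with h | h
      · have := mul_nonneg hm hy.le
        nlinarith
      · have : 0 < m := by linarith [h ▸ hlm]
        nlinarith
    · exact isOpen_lt continuous_const f.continuous
    · intro A ⟨z, ⟨n, c, v, hn, hc, hv, hz⟩, hzD⟩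
      by_contra h
      push_neg at h
      have : f z ≤ 0 := by
        rw [hz, map_sum]
        apply Finset.sum_nonpos
        intro i _
        rw [map_smul, smul_eq_mul]
        have : f (v i) ≤ 0 := by
          have := h (v i) (hv i)
          simpa using not_lt.mp this
        nlinarith [(hc i).le]
      exact absurd hzD (by simpa using this)
end

section
/- A coherent set of desirable options D is mixing if and only if the complement of D is closed under positive linear combinations, i.e. posi(V \ D) = V \ D, equivalently D ∩ posi(V \ D) = ∅. -/
lemma subset_posi {V : Type*} [AddCommGroup V] [Module ℝ V] (S : Set V) :
    S ⊆ Posi S := by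
  intro x hx
  exact ⟨1, fun _ => 1, fun _ => x, Nat.one_pos, fun _ => one_pos, fun _ => hx, by simp⟩

lemma mixing_iff_subset {V : Type*} [AddCommGroup V] [Module ℝ V] (D : Set V) :
    MixingSet D ↔ Posi Dᶜ ⊆ Dᶜ := by
  classical
  constructor
  · intro hm x hx
    intro hxD
    obtain ⟨n, c, v, hn, hc, hv, hx⟩ := hx
    obtain ⟨a, haA, haD⟩ := hm (Finset.image v Finset.univ)
      ⟨x, ⟨n, c, v, hn, hc, fun i => Finset.mem_coe.mpr
        (Finset.mem_image_of_mem v (Finset.mem_univ i)), hx⟩, hxD⟩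
    obtain ⟨i, _, rfl⟩ := Finset.mem_image.mp haA
    exact hv i haD
  · intro hsub A ⟨x, hxP, hxD⟩
    by_contra h
    push_neg at h
    obtain ⟨n, c, v, hn, hc, hv, hx⟩ := hxP
    have : x ∈ Posi Dᶜ := ⟨n, c, v, hn, hc, fun i => h (v i) (hv i), hx⟩
    exact hsub this hxD

theorem stmt14 {V : Type*} [AddCommGroup V] [Module ℝ V]
    (gt : V → V → Prop)
    (hirr : ∀ x : V, ¬ gt x x)
    (htrans : ∀ x y z : V, gt x y → gt y z → gt x z)
    (haddc : ∀ x y z : V, gt x y → gt (x + z) (y + z))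
    (hsmulc : ∀ (x y : V) (c : ℝ), 0 < c → gt x y → gt (c • x) (c • y))
    (D : Set V)
    (hD0 : (0 : V) ∉ D)
    (hDcone : ∀ x ∈ D, ∀ y ∈ D, ∀ l m : ℝ, 0 ≤ l → 0 ≤ m → 0 < l + m → l • x + m • y ∈ D)
    (hDpos : {x : V | gt x 0} ⊆ D) :
    (MixingSet D ↔ Posi Dᶜ = Dᶜ) ∧ (MixingSet D ↔ D ∩ Posi Dᶜ = ∅) := by
  have h1 : (Posi Dᶜ = Dᶜ) ↔ Posi Dᶜ ⊆ Dᶜ :=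
    ⟨fun h => h.le, fun h => le_antisymm h (subset_posi _)⟩
  have h2 : (D ∩ Posi Dᶜ = ∅) ↔ Posi Dᶜ ⊆ Dᶜ := by
    rw [Set.eq_empty_iff_forall_notMem]
    constructor
    · intro h x hx hxD
      exact h x ⟨hxD, hx⟩
    · intro h x ⟨hxD, hxP⟩
      exact h hxP hxD
  exact ⟨(mixing_iff_subset D).trans h1.symm, (mixing_iff_subset D).trans h2.symm⟩
end

section
/- A set of desirable options D ⊆ V is Archimedean if and only if there is a non-empty set L of positive bounded linear functionals such that D = ∩_{f ∈ L} {x : f(x) > 0}; the largest such set is V*_{≻0}(D), the set of all positive bounded linear functionals strictly positive on D. -/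
/-!
An Archimedean `D` is separated from each `x ∉ D` by a bounded superlinear `u`; Hahn–Banach
(applied to the sublinear `y ↦ -u (-y)`) gives a bounded linear `f ≥ u` with `f x = u x`, which
is then positive on `D` (hence on the positive cone) and nonpositive at `x`. So `D` is the
intersection of the half-spaces `{f > 0}` over its positive dual. Conversely, an intersection of
open half-spaces of positive functionals is coherent, and each of its functionals is already a
separating superlinear map.
-/

/-- Coherence of a set of desirable options with respect to the strict ordering `gt`. -/
def CoherentD {V : Type*} [AddCommGroup V] [Module ℝ V] (gt : V → V → Prop)
    (D : Set V) : Prop :=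
  (0 : V) ∉ D ∧
  (∀ x ∈ D, ∀ y ∈ D, ∀ l m : ℝ, 0 ≤ l → 0 ≤ m → 0 < l + m → l • x + m • y ∈ D) ∧
  {x : V | gt x 0} ⊆ D

/-- Archimedeanity of a set of desirable options: coherence plus separation by bounded
superlinear functionals strictly positive on `D`. -/
def ArchimedeanD {V : Type*} [NormedAddCommGroup V] [NormedSpace ℝ V]
    (gt : V → V → Prop) (D : Set V) : Prop :=
  CoherentD gt D ∧
  ∀ x ∉ D, ∃ u : V → ℝ,
    (∀ y z : V, u y + u z ≤ u (y + z)) ∧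
    (∀ (y : V) (c : ℝ), 0 ≤ c → u (c • y) = c * u y) ∧
    (∃ K : ℝ, ∀ y : V, |u y| ≤ K * ‖y‖) ∧
    (∀ y ∈ D, 0 < u y) ∧ u x ≤ 0

open Set

theorem exists_linearMap_le_sublinear_eq {E : Type*} [AddCommGroup E] [Module ℝ E] (N : E → ℝ)
    (N_hom : ∀ c : ℝ, 0 < c → ∀ x, N (c • x) = c * N x) (N_add : ∀ x y, N (x + y) ≤ N x + N y)
    (x : E) : ∃ g : E →ₗ[ℝ] ℝ, g x = N x ∧ ∀ y, g y ≤ N y := by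
  have N_zero : N 0 = 0 := by
    have h := N_hom 2 two_pos 0
    rw [smul_zero] at h
    linarith
  have h_wd : ∀ c : ℝ, c • x = 0 → c • N x = 0 := by
    intro c hc
    rcases smul_eq_zero.1 hc with rfl | rfl
    · exact zero_smul ℝ _
    · rw [N_zero, smul_zero]
  let f := LinearPMap.mkSpanSingleton' (σ := RingHom.id ℝ) x (N x) h_wd
  have hf : ∀ z : f.domain, f z ≤ N z := by
    rintro ⟨z, hz⟩
    obtain ⟨c, rfl⟩ := Submodule.mem_span_singleton.1 hz
    rw [LinearPMap.mkSpanSingleton'_apply, RingHom.id_apply, smul_eq_mul]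
    rcases lt_trichotomy c 0 with hc | rfl | hc
    · have hsum : 0 ≤ N x + N (-x) := by simpa [N_zero] using N_add x (-x)
      have hcx : N (c • x) = -c * N (-x) := by
        rw [← N_hom (-c) (neg_pos.2 hc), neg_smul, smul_neg, neg_neg]
      rw [hcx]
      nlinarith
    · simp [N_zero]
    · rw [N_hom c hc]
  obtain ⟨g, hg_ext, hg_le⟩ := exists_extension_of_le_sublinear f N N_hom N_add hf
  exact ⟨g, (hg_ext ⟨x, Submodule.mem_span_singleton_self x⟩).trans
    (LinearPMap.mkSpanSingleton'_apply_self _ _ _ _), hg_le⟩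

theorem exists_continuousLinearMap_ge_superlinear_eq {E : Type*} [NormedAddCommGroup E]
    [NormedSpace ℝ E] (u : E → ℝ) (u_hom : ∀ c : ℝ, 0 < c → ∀ y, u (c • y) = c * u y)
    (u_add : ∀ y z, u y + u z ≤ u (y + z)) {K : ℝ} (u_bdd : ∀ y, -u y ≤ K * ‖y‖) (x : E) :
    ∃ f : E →L[ℝ] ℝ, f x = u x ∧ ∀ y, u y ≤ f y := by
  obtain ⟨g, hgx, hg_le⟩ := exists_linearMap_le_sublinear_eq (fun y => -u (-y))
    (fun c hc y => by rw [← smul_neg, u_hom c hc, mul_neg])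
    (fun y z => by have := u_add (-y) (-z); rw [← neg_add] at this; linarith) (-x)
  have hu_le : ∀ y, u y ≤ g y := fun y => by simpa using hg_le (-y)
  have hg_bdd : ∀ y, ‖g y‖ ≤ K * ‖y‖ := fun y => by
    rw [Real.norm_eq_abs, abs_le]
    constructor
    · linarith [u_bdd y, hu_le y]
    · have := u_bdd (-y)
      rw [norm_neg] at this
      linarith [hg_le y]
  refine ⟨g.mkContinuous K hg_bdd, ?_, hu_le⟩
  simpa using hgx

section Archimedean

variable {V : Type*} [NormedAddCommGroup V] [NormedSpace ℝ V] {gt : V → V → Prop} {D : Set V}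

variable (gt D) in
/-- The paper's `V*_{≻0}(D)`. -/
def positiveDual : Set (V →L[ℝ] ℝ) :=
  {f | (∀ x, gt x 0 → 0 < f x) ∧ ∀ x ∈ D, 0 < f x}

theorem ArchimedeanD.exists_mem_positiveDual_nonpos (hA : ArchimedeanD gt D) {x : V}
    (hx : x ∉ D) : ∃ f ∈ positiveDual gt D, f x ≤ 0 := by
  obtain ⟨u, u_add, u_hom, ⟨K, hK⟩, u_pos, hux⟩ := hA.2 x hx
  obtain ⟨f, hfx, hu_le⟩ := exists_continuousLinearMap_ge_superlinear_eq u
    (fun c hc y => u_hom y c hc.le) u_add (fun y => (neg_le_abs (u y)).trans (hK y)) x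
  have hf_pos : ∀ y ∈ D, 0 < f y := fun y hy => (u_pos y hy).trans_le (hu_le y)
  exact ⟨f, ⟨fun y hy => hf_pos y (hA.1.2.2 hy), hf_pos⟩, hfx ▸ hux⟩

theorem ArchimedeanD.positiveDual_nonempty (hA : ArchimedeanD gt D) :
    (positiveDual gt D).Nonempty :=
  let ⟨f, hf, _⟩ := hA.exists_mem_positiveDual_nonpos hA.1.1
  ⟨f, hf⟩

theorem ArchimedeanD.eq_iInter_positiveDual (hA : ArchimedeanD gt D) :
    D = ⋂ f ∈ positiveDual gt D, {x : V | 0 < f x} := by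
  refine Subset.antisymm (fun x hx => mem_iInter₂.2 fun f hf => hf.2 x hx) fun x hx => ?_
  by_contra hxD
  obtain ⟨f, hf, hfx⟩ := hA.exists_mem_positiveDual_nonpos hxD
  exact hfx.not_gt (mem_iInter₂.1 hx f hf)

theorem subset_positiveDual_of_eq_iInter {L : Set (V →L[ℝ] ℝ)}
    (hL : ∀ f ∈ L, ∀ x, gt x 0 → 0 < f x) (hD : D = ⋂ f ∈ L, {x : V | 0 < f x}) :
    L ⊆ positiveDual gt D := fun f hf =>
  ⟨hL f hf, fun _ hx => mem_iInter₂.1 (hD ▸ hx) f hf⟩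

theorem coherentD_iInter {L : Set (V →L[ℝ] ℝ)} (hL_ne : L.Nonempty)
    (hL : ∀ f ∈ L, ∀ x, gt x 0 → 0 < f x) : CoherentD gt (⋂ f ∈ L, {x : V | 0 < f x}) := by
  refine ⟨fun h => ?_, fun x hx y hy l m hl hm hlm => mem_iInter₂.2 fun f hf => ?_,
    fun x hx => mem_iInter₂.2 fun f hf => hL f hf x hx⟩
  · obtain ⟨f, hf⟩ := hL_ne
    simpa using mem_iInter₂.1 h f hf
  · have hfx : 0 < f x := mem_iInter₂.1 hx f hf
    have hfy : 0 < f y := mem_iInter₂.1 hy f hf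
    change 0 < f (l • x + m • y)
    rw [map_add, map_smul, map_smul, smul_eq_mul, smul_eq_mul]
    calc 0 < (l + m) * min (f x) (f y) := mul_pos hlm (lt_min hfx hfy)
      _ ≤ l * f x + m * f y := by
        rw [add_mul]
        gcongr
        exacts [min_le_left _ _, min_le_right _ _]

theorem archimedeanD_of_eq_iInter {L : Set (V →L[ℝ] ℝ)} (hL_ne : L.Nonempty)
    (hL : ∀ f ∈ L, ∀ x, gt x 0 → 0 < f x) (hD : D = ⋂ f ∈ L, {x : V | 0 < f x}) :
    ArchimedeanD gt D := by
  subst hD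
  refine ⟨coherentD_iInter hL_ne hL, fun x hx => ?_⟩
  obtain ⟨f, hf, hfx⟩ : ∃ f ∈ L, f x ≤ 0 := by simpa using hx
  refine ⟨f, fun y z => (map_add f y z).ge, fun y c _ => map_smul f c y, ⟨‖f‖, f.le_opNorm⟩,
    fun y hy => mem_iInter₂.1 hy f hf, hfx⟩

end Archimedean

theorem stmt17_general {V : Type*} [NormedAddCommGroup V] [NormedSpace ℝ V]
    (gt : V → V → Prop)
    (D : Set V) :
    (ArchimedeanD gt D ↔
      ∃ L : Set (V →L[ℝ] ℝ), L.Nonempty ∧ (∀ f ∈ L, ∀ x : V, gt x 0 → 0 < f x) ∧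
        D = ⋂ f ∈ L, {x : V | 0 < f x}) ∧
    (ArchimedeanD gt D →
      (D = ⋂ f ∈ {f : V →L[ℝ] ℝ | (∀ x : V, gt x 0 → 0 < f x) ∧ ∀ x ∈ D, 0 < f x},
        {x : V | 0 < f x}) ∧
      ∀ L : Set (V →L[ℝ] ℝ), L.Nonempty → (∀ f ∈ L, ∀ x : V, gt x 0 → 0 < f x) →
        D = ⋂ f ∈ L, {x : V | 0 < f x} →
        L ⊆ {f : V →L[ℝ] ℝ | (∀ x : V, gt x 0 → 0 < f x) ∧ ∀ x ∈ D, 0 < f x}) :=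
  ⟨⟨fun hA => ⟨positiveDual gt D, hA.positiveDual_nonempty, fun _ hf => hf.1,
      hA.eq_iInter_positiveDual⟩,
    fun ⟨_, hL_ne, hL, hD⟩ => archimedeanD_of_eq_iInter hL_ne hL hD⟩,
  fun hA => ⟨hA.eq_iInter_positiveDual, fun _ _ hL hD => subset_positiveDual_of_eq_iInter hL hD⟩⟩

theorem stmt17 {V : Type*} [NormedAddCommGroup V] [NormedSpace ℝ V] [CompleteSpace V]
    (gt : V → V → Prop)
    (hirr : ∀ x : V, ¬ gt x x)
    (htrans : ∀ x y z : V, gt x y → gt y z → gt x z)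
    (haddc : ∀ x y z : V, gt x y → gt (x + z) (y + z))
    (hsmulc : ∀ (x y : V) (c : ℝ), 0 < c → gt x y → gt (c • x) (c • y))
    (hint : (interior {x : V | gt x 0}).Nonempty)
    (hdual : ∃ f : V →L[ℝ] ℝ, ∀ x : V, gt x 0 → 0 < f x)
    (D : Set V) :
    (ArchimedeanD gt D ↔
      ∃ L : Set (V →L[ℝ] ℝ), L.Nonempty ∧ (∀ f ∈ L, ∀ x : V, gt x 0 → 0 < f x) ∧
        D = ⋂ f ∈ L, {x : V | 0 < f x}) ∧
    (ArchimedeanD gt D →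
      (D = ⋂ f ∈ {f : V →L[ℝ] ℝ | (∀ x : V, gt x 0 → 0 < f x) ∧ ∀ x ∈ D, 0 < f x},
        {x : V | 0 < f x}) ∧
      ∀ L : Set (V →L[ℝ] ℝ), L.Nonempty → (∀ f ∈ L, ∀ x : V, gt x 0 → 0 < f x) →
        D = ⋂ f ∈ L, {x : V | 0 < f x} →
        L ⊆ {f : V →L[ℝ] ℝ | (∀ x : V, gt x 0 → 0 < f x) ∧ ∀ x ∈ D, 0 < f x}) :=
  stmt17_general gt D
end

section
/- For a set of desirable options D ⊆ V, the associated set of desirable option sets K_D := {finite A ⊆ V : A ∩ D ≠ ∅} is coherent if and only if D is coherent. Coherence of K means: (K0) A ∈ K implies A \ {0} ∈ K; (K1) {0} ∉ K; (K2) if A₁, A₂ ∈ K and for every x ∈ A₁, y ∈ A₂ coefficients λ_{x,y}, μ_{x,y} ≥ 0 with λ_{x,y}+μ_{x,y} > 0 are given, then {λ_{x,y}x + μ_{x,y}y : x ∈ A₁, y ∈ A₂} ∈ K; (K3) A ∈ K and A ⊆ B imply B ∈ K; (K4) {x} ∈ K for all x ≻ 0. -/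
theorem stmt19 {V : Type*} [AddCommGroup V] [Module ℝ V] [DecidableEq V]
    (gt : V → V → Prop) (D : Set V) :
    ((∀ A : Finset V, (∃ x ∈ A, x ∈ D) → ∃ x ∈ A.erase 0, x ∈ D) ∧
     ¬ (∃ x ∈ ({(0 : V)} : Finset V), x ∈ D) ∧
     (∀ A₁ : Finset V, (∃ x ∈ A₁, x ∈ D) → ∀ A₂ : Finset V, (∃ x ∈ A₂, x ∈ D) →
        ∀ l m : V → V → ℝ,
        (∀ x ∈ A₁, ∀ y ∈ A₂, 0 ≤ l x y ∧ 0 ≤ m x y ∧ 0 < l x y + m x y) →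
        ∃ z ∈ (A₁ ×ˢ A₂).image (fun p : V × V => l p.1 p.2 • p.1 + m p.1 p.2 • p.2),
          z ∈ D) ∧
     (∀ A : Finset V, (∃ x ∈ A, x ∈ D) → ∀ B : Finset V, A ⊆ B → ∃ x ∈ B, x ∈ D) ∧
     (∀ x : V, gt x 0 → ∃ y ∈ ({x} : Finset V), y ∈ D)) ↔
    ((0 : V) ∉ D ∧
     (∀ x ∈ D, ∀ y ∈ D, ∀ l m : ℝ, 0 ≤ l → 0 ≤ m → 0 < l + m → l • x + m • y ∈ D) ∧
     {x : V | gt x 0} ⊆ D) := by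
  constructor
  · rintro ⟨_, h1, h2, _, h4⟩
    refine ⟨fun h0 => h1 ⟨0, by simp, h0⟩, ?_, fun x hx => ?_⟩
    · intro x hx y hy l m hl hm hlm
      obtain ⟨z, hz, hzD⟩ := h2 {x} ⟨x, by simp, hx⟩ {y} ⟨y, by simp, hy⟩
        (fun _ _ => l) (fun _ _ => m) (fun _ _ _ _ => ⟨hl, hm, hlm⟩)
      simp only [Finset.mem_image, Finset.mem_product, Finset.mem_singleton] at hz
      obtain ⟨p, ⟨hp1, hp2⟩, rfl⟩ := hz
      rw [← hp1, ← hp2]; exact hzD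
    · obtain ⟨y, hy, hyD⟩ := h4 x hx
      simp only [Finset.mem_singleton] at hy
      rwa [hy] at hyD
  · rintro ⟨h0, hcl, hgt⟩
    refine ⟨?_, ?_, ?_, ?_, ?_⟩
    · rintro A ⟨x, hxA, hxD⟩
      exact ⟨x, Finset.mem_erase.2 ⟨fun h => h0 (h ▸ hxD), hxA⟩, hxD⟩
    · rintro ⟨x, hx, hxD⟩
      simp only [Finset.mem_singleton] at hx
      exact h0 (hx ▸ hxD)
    · rintro A₁ ⟨x, hxA, hxD⟩ A₂ ⟨y, hyA, hyD⟩ l m hc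
      obtain ⟨hl, hm, hlm⟩ := hc x hxA y hyA
      exact ⟨l x y • x + m x y • y,
        Finset.mem_image.2 ⟨(x, y), Finset.mem_product.2 ⟨hxA, hyA⟩, rfl⟩,
        hcl x hxD y hyD _ _ hl hm hlm⟩
    · rintro A ⟨x, hxA, hxD⟩ B hAB
      exact ⟨x, hAB hxA, hxD⟩
    · exact fun x hx => ⟨x, Finset.mem_singleton_self x, hgt hx⟩
end
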